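/- Let G be a finite group, let S and T be G-sets, and suppose there exists a G-equivariant map ε : T → S. Let m ∈ ℤ[T] be fixed by G, and let f_m : ℤ[S] → ℤ[T] be the additive map sending every basis element s ∈ S to m. If f_m = Σ_{g∈G} g•h for some additive map h : ℤ[S] → ℤ[T], then m = Σ_{g∈G} g•m' for some m' ∈ ℤ[T]. In other words, the map Ĥ⁰(G, Hom(ℤ,ℤ[T])) → Ĥ⁰(G, Hom(ℤ[S],ℤ[T])) induced by the augmentation ℤ[S] → ℤ is injective. -/
import Mathlib


/-- The action of `g : G` on `ℤ[S]`, permuting the basis elements. -/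
noncomputable def permHom {G : Type*} [Group G] {S : Type*} [MulAction G S]
    (g : G) : (S →₀ ℤ) →+ (S →₀ ℤ) :=
  Finsupp.mapDomain.addMonoidHom (fun s => g • s)

/-- The action of `g : G` on `Hom(ℤ[S], ℤ[T])`: `(g • f)(m) = g • f (g⁻¹ • m)`. -/
noncomputable def homAct {G S T : Type*} [Group G] [MulAction G S] [MulAction G T]
    (g : G) (f : (S →₀ ℤ) →+ (T →₀ ℤ)) : (S →₀ ℤ) →+ (T →₀ ℤ) :=
  (permHom g).comp (f.comp (permHom g⁻¹))

/-- The additive map `ℤ[S] → ℤ[T]` sending each basis element `s ∈ S` to `m`. -/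
noncomputable def constOnBasis {S T : Type*} (m : T →₀ ℤ) : (S →₀ ℤ) →+ (T →₀ ℤ) :=
  Finsupp.liftAddHom (fun _ : S => zmultiplesHom (T →₀ ℤ) m)

lemma permHom_apply_smul {G : Type*} [Group G] {S : Type*} [MulAction G S]
    (g : G) (x : S →₀ ℤ) (t : S) : permHom g x (g • t) = x t := by
  show Finsupp.mapDomain (fun s => g • s) x (g • t) = x t
  exact Finsupp.mapDomain_apply (MulAction.injective g) x t

lemma permHom_apply {G : Type*} [Group G] {S : Type*} [MulAction G S]
    (g : G) (x : S →₀ ℤ) (t : S) : permHom g x t = x (g⁻¹ • t) := by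
  conv_lhs => rw [show t = g • (g⁻¹ • t) by simp]
  exact permHom_apply_smul g x _

/-- Injectivity of `Ĥ⁰(G, Hom(ℤ, ℤ[T])) → Ĥ⁰(G, Hom(ℤ[S], ℤ[T]))` when there is a
`G`-map `ε : T → S`: if the map sending every basis element of `ℤ[S]` to a `G`-fixed
element `m ∈ ℤ[T]` is a norm, then `m` itself is a norm. -/
theorem stmt2 {G S T : Type*} [Group G] [Fintype G] [MulAction G S] [MulAction G T]
    (ε : T → S) (hε : ∀ (g : G) (t : T), ε (g • t) = g • ε t)
    (m : T →₀ ℤ) (hm : ∀ g : G, permHom g m = m)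
    (h : (S →₀ ℤ) →+ (T →₀ ℤ))
    (hsum : constOnBasis (S := S) m = ∑ g : G, homAct g h) :
    ∃ m' : T →₀ ℤ, m = ∑ g : G, permHom g m' := by
  classical
  set F : T → ℤ := fun t => h (Finsupp.single (ε t) 1) t with hF
  -- the support of m is G-stable
  have hstab : ∀ (g : G) (t : T), m (g • t) = m t := by
    intro g t
    conv_lhs => rw [← hm g]
    exact permHom_apply_smul g m t
  -- key identity
  have key : ∀ t : T, m t = ∑ g : G, F (g⁻¹ • t) := by
    intro t
    have h1 : constOnBasis (S := S) m (Finsupp.single (ε t) 1) t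
        = (∑ g : G, homAct g h) (Finsupp.single (ε t) 1) t := by rw [hsum]
    have hL : constOnBasis (S := S) m (Finsupp.single (ε t) 1) = m := by
      simp [constOnBasis]
    rw [hL] at h1
    rw [h1, AddMonoidHom.finset_sum_apply, Finsupp.finset_sum_apply]
    refine Finset.sum_congr rfl fun g _ => ?_
    have h2 : permHom (G := G) g⁻¹ (Finsupp.single (ε t) (1 : ℤ))
        = Finsupp.single (ε (g⁻¹ • t)) 1 := by
      show Finsupp.mapDomain _ _ = _
      rw [Finsupp.mapDomain_single, hε]
    rw [homAct, AddMonoidHom.comp_apply, AddMonoidHom.comp_apply, h2,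
      permHom_apply]
  -- define m'
  refine ⟨Finsupp.onFinset m.support (fun t => if m t ≠ 0 then F t else 0)
    (by intro t ht; by_cases hmt : m t = 0 <;> simp_all), ?_⟩
  ext t
  rw [Finsupp.finset_sum_apply]
  simp only [permHom_apply, Finsupp.onFinset_apply]
  by_cases hmt : m t = 0
  · rw [hmt]
    refine (Finset.sum_eq_zero fun g _ => ?_).symm
    rw [hstab g⁻¹ t, hmt]
    simp
  · rw [key t]
    refine Finset.sum_congr rfl fun g _ => ?_
    rw [hstab g⁻¹ t, if_pos hmt]
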